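/- The set ℝ⟨⟨X_δ⟩⟩ = {δ + c : c ∈ ℝ⟨⟨X⟩⟩} with the composition product c_δ ∘ d_δ := δ + d + c ∘̃ d is a group with unit δ: the product is associative, δ + 0 is a two-sided identity, and every element c_δ has a two-sided inverse c_δ^{∘−1} = δ + c^{∘−1} in ℝ⟨⟨X_δ⟩⟩. -/
import Mathlib


open scoped TensorProduct

noncomputable section

namespace Paper

/-- Words over the alphabet `X = {x0, x1}`, encoded as lists over `Fin 2`
(`0` stands for the letter `x0` and `1` for the letter `x1`). -/
abbrev Word : Type := List (Fin 2)

/-- Formal power series `ℝ⟨⟨X⟩⟩`, given by their coefficient functions `η ↦ ⟨c,η⟩`. -/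
abbrev Series : Type := Word → ℝ

/-- The left shift `x_i⁻¹(c)`. -/
def lshift (i : Fin 2) (c : Series) : Series := fun w => c (i :: w)

/-- Left concatenation `x_i c` of the letter `x_i` onto every word of `c`. -/
def lconcat (i : Fin 2) (c : Series) : Series := fun w =>
  match w with
  | [] => 0
  | j :: v => if j = i then c v else 0

/-- Right concatenation `p x_i` of the letter `x_i` onto every word of `p`. -/
def rconcat {R : Type*} [Zero R] (i : Fin 2) (p : Word → R) : Word → R := fun w =>
  if w.getLast? = some i then p w.dropLast else 0

/-- The series of a single word. -/
def ind (η : Word) : Series := fun w => if w = η then 1 else 0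

/-- The empty word as a series, the unit `∅` (often written `1`). -/
def one : Series := ind []

/-- The shuffle product, defined coefficientwise by the recursion
`⟨c ⧢ d, ∅⟩ = ⟨c,∅⟩⟨d,∅⟩` and `⟨c ⧢ d, x_i w⟩ = ⟨x_i⁻¹(c) ⧢ d, w⟩ + ⟨c ⧢ x_i⁻¹(d), w⟩`,
which is the bilinear (and ultrametrically continuous) extension of the recursive
shuffle product of words. -/
def shuffleFn : Series → Series → Word → ℝ
  | c, d, [] => c [] * d []
  | c, d, i :: w => shuffleFn (lshift i c) d w + shuffleFn c (lshift i d) w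

/-- The shuffle product on `ℝ⟨⟨X⟩⟩`. -/
def sh (c d : Series) : Series := shuffleFn c d

/-- The map `φ_d(x_i)` for the modified composition product:
`φ_d(x0)(e) = x0 e` and `φ_d(x1)(e) = x1 e + x0 (d ⧢ e)`. -/
def phiLetter (d : Series) (i : Fin 2) (e : Series) : Series :=
  if i = 0 then lconcat 0 e else lconcat 1 e + lconcat 0 (sh d e)

/-- `φ_d(η)`, the algebra-homomorphism extension determined by
`φ_d(x_i η) = φ_d(x_i) ∘ φ_d(η)` and `φ_d(∅) = id`. -/
def phi (d : Series) : Word → Series → Series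
  | [], e => e
  | i :: η, e => phiLetter d i (phi d η e)

/-- The modified composition product `c ∘̃ d = Σ_η ⟨c,η⟩ φ_d(η)(1)`. -/
def mcomp (c d : Series) : Series := fun w => ∑' η : Word, c η * phi d η one w

/-- The map `ψ_d(x_i)` for the composition product:
`ψ_d(x0)(e) = x0 e` and `ψ_d(x1)(e) = x0 (d ⧢ e)`. -/
def psiLetter (d : Series) (i : Fin 2) (e : Series) : Series :=
  if i = 0 then lconcat 0 e else lconcat 0 (sh d e)

/-- `ψ_d(η)`, determined by `ψ_d(x_i η) = ψ_d(x_i) ∘ ψ_d(η)` and `ψ_d(∅) = id`. -/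
def psi (d : Series) : Word → Series → Series
  | [], e => e
  | i :: η, e => psiLetter d i (psi d η e)

/-- The composition product `c ∘ d = Σ_η ⟨c,η⟩ ψ_d(η)(1)`. -/
def comp (c d : Series) : Series := fun w => ∑' η : Word, c η * psi d η one w

/-- The group operation on `ℝ⟨⟨X_δ⟩⟩ = {δ + c}`, transported to the `c`-parts:
`c_δ ∘ d_δ = δ + (d + c ∘̃ d)`. -/
def gop (c d : Series) : Series := d + mcomp c d

/-- The Ferfera series `c = Σ_{k ≥ 0} k! x1^k`. -/
def ferfera : Series := fun w =>
  if w = List.replicate w.length (1 : Fin 2) then (Nat.factorial w.length : ℝ) else 0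

/-- The degree of a word, `deg(η) = 2|η|_{x0} + |η|_{x1} + 1`. -/
def degW (η : Word) : ℕ := 2 * η.count 0 + η.count 1 + 1

/-- The output feedback Hopf algebra `H`: the free unital commutative `ℝ`-algebra on the
coordinate functions `a_η`, realized as polynomials in commuting variables indexed by words. -/
abbrev H : Type := MvPolynomial Word ℝ

/-- The coordinate function `a_η`. -/
def aw (η : Word) : H := MvPolynomial.X η

/-- Character (pointwise) evaluation of elements of `H` at a series `c`:
`(a_{η₁} ⋯ a_{η_l})(c) = ⟨c,η₁⟩ ⋯ ⟨c,η_l⟩`, extended as an algebra map. -/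
def evalS (c : Series) : H →ₐ[ℝ] ℝ := MvPolynomial.aeval c

/-- Evaluation of `H ⊗ H` at a pair of series: `(p ⊗ q)(c,d) = p(c) q(d)`. -/
def evalPair (c d : Series) : H ⊗[ℝ] H →ₗ[ℝ] ℝ :=
  (LinearMap.mul' ℝ ℝ).comp (TensorProduct.map (evalS c).toLinearMap (evalS d).toLinearMap)

/-- The counit `ε` of `H`: `ε(a_η) = 0`, `ε(1) = 1`. -/
def counit : H →ₐ[ℝ] ℝ := evalS 0

/-- The defining property of the full coproduct `Δ` of the output feedback Hopf algebra:
`Δ a_η = Δ̃ a_η + 1 ⊗ a_η` where `Δ̃ a_η (c,d) = ⟨c ∘̃ d, η⟩`, i.e.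
`(Δ a_η)(c,d) = ⟨c ∘̃ d, η⟩ + ⟨d, η⟩` for all series `c, d`; `Δ` is an algebra morphism. -/
def IsFBCoproduct (Δ : H →ₐ[ℝ] (H ⊗[ℝ] H)) : Prop :=
  ∀ (η : Word) (c d : Series), evalPair c d (Δ (aw η)) = mcomp c d η + d η

/-- `S` is an antipode for the coproduct `Δ` (with counit `ε`):
`μ ∘ (S ⊗ id) ∘ Δ = 1·ε = μ ∘ (id ⊗ S) ∘ Δ`. -/
def IsAntipode (Δ : H →ₐ[ℝ] (H ⊗[ℝ] H)) (S : H →ₗ[ℝ] H) : Prop :=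
  (∀ p : H, LinearMap.mul' ℝ H (TensorProduct.map S LinearMap.id (Δ p)) = counit p • 1) ∧
  (∀ p : H, LinearMap.mul' ℝ H (TensorProduct.map LinearMap.id S (Δ p)) = counit p • 1)

/-- The right-augmentation operator `θ̃_i`, the derivation on `H` with `θ̃_i(a_η) = a_{η x_i}`. -/
def thetaR (i : Fin 2) : Derivation ℝ H H :=
  MvPolynomial.mkDerivation ℝ fun η => aw (η ++ [i])

/-- The left-augmentation operator `θ_i`, the derivation on `H` with `θ_i(a_η) = a_{x_i η}`. -/
def thetaL (i : Fin 2) : Derivation ℝ H H :=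
  MvPolynomial.mkDerivation ℝ fun η => aw (i :: η)

/-- The multiplication operator `κ_∅(h) = h · a_∅`. -/
def kappaE : H →ₗ[ℝ] H := LinearMap.mulRight ℝ (aw [])

/-- The shuffle coefficient `⟨ξ ⧢ ν, η⟩`. -/
def shCoeff (ξ ν η : Word) : ℝ := sh (ind ξ) (ind ν) η

/-- The finite set of words of length `n`. -/
def wordsLen (n : ℕ) : Finset Word :=
  (Finset.univ : Finset (Fin n → Fin 2)).image List.ofFn

/-- The deshuffle coproduct `Δ_⧢ a_η = Σ_{ξ,ν} ⟨ξ ⧢ ν, η⟩ a_ξ ⊗ a_ν`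
(the unique coproduct satisfying `Δ_⧢ a_∅ = a_∅ ⊗ a_∅` and the coderivation recursions
with respect to the augmentation operators). -/
def deshuffle (η : Word) : H ⊗[ℝ] H :=
  ∑ k ∈ Finset.range (η.length + 1), ∑ ξ ∈ wordsLen k, ∑ ν ∈ wordsLen (η.length - k),
    shCoeff ξ ν η • (aw ξ ⊗ₜ[ℝ] aw ν)

/-- Iterated integrals: `E_∅[u](t) = 1`, `E_{x_i η}[u](t) = ∫₀ᵗ u_i(s) E_η[u](s) ds`. -/
def E (u : Fin 2 → ℝ → ℝ) : Word → ℝ → ℝ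
  | [], _ => 1
  | i :: η, t => ∫ s in (0:ℝ)..t, u i s * E u η s

/-! ### Auxiliary lemmas for `feedback_group` -/

lemma shuffleFn_nil' (a b : Series) : shuffleFn a b [] = a [] * b [] := rfl
lemma shuffleFn_cons' (a b : Series) (i : Fin 2) (w : Word) :
    shuffleFn a b (i :: w) = shuffleFn (lshift i a) b w + shuffleFn a (lshift i b) w := rfl

lemma lshift_zero (i : Fin 2) : lshift i (0 : Series) = 0 := rfl
lemma lshift_add (i : Fin 2) (a b : Series) : lshift i (a + b) = lshift i a + lshift i b := rfl

lemma shuffleFn_congr : ∀ (w : Word) (a a' b b' : Series),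
    (∀ u : Word, u.length ≤ w.length → a u = a' u) →
    (∀ u : Word, u.length ≤ w.length → b u = b' u) →
    shuffleFn a b w = shuffleFn a' b' w
  | [], a, a', b, b', ha, hb => by
      simp [shuffleFn_nil', ha [] (by simp), hb [] (by simp)]
  | i :: w, a, a', b, b', ha, hb => by
      rw [shuffleFn_cons', shuffleFn_cons',
        shuffleFn_congr w (lshift i a) (lshift i a') b b'
          (fun u hu => ha (i :: u) (by simpa using Nat.succ_le_succ hu))
          (fun u hu => hb u (le_trans hu (Nat.le_succ _))),
        shuffleFn_congr w a a' (lshift i b) (lshift i b')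
          (fun u hu => ha u (le_trans hu (Nat.le_succ _)))
          (fun u hu => hb (i :: u) (by simpa using Nat.succ_le_succ hu))]

lemma shuffleFn_zero_right : ∀ (w : Word) (a : Series), shuffleFn a 0 w = 0
  | [], a => by simp [shuffleFn_nil']
  | i :: w, a => by
      rw [shuffleFn_cons', lshift_zero, shuffleFn_zero_right w, shuffleFn_zero_right w, add_zero]

lemma shuffleFn_zero_left : ∀ (w : Word) (b : Series), shuffleFn 0 b w = 0
  | [], b => by simp [shuffleFn_nil']
  | i :: w, b => by
      rw [shuffleFn_cons', lshift_zero, shuffleFn_zero_left w, shuffleFn_zero_left w, add_zero]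

lemma shuffleFn_add_right : ∀ (w : Word) (a b b' : Series),
    shuffleFn a (b + b') w = shuffleFn a b w + shuffleFn a b' w
  | [], a, b, b' => by simp [shuffleFn_nil']; ring
  | i :: w, a, b, b' => by
      rw [shuffleFn_cons', lshift_add, shuffleFn_add_right w, shuffleFn_add_right w,
        shuffleFn_cons', shuffleFn_cons']; ring

lemma shuffleFn_add_left : ∀ (w : Word) (a a' b : Series),
    shuffleFn (a + a') b w = shuffleFn a b w + shuffleFn a' b w
  | [], a, a', b => by simp [shuffleFn_nil']; ring
  | i :: w, a, a', b => by
      rw [shuffleFn_cons', lshift_add, shuffleFn_add_left w, shuffleFn_add_left w,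
        shuffleFn_cons', shuffleFn_cons']; ring

lemma shuffleFn_comm : ∀ (w : Word) (a b : Series), shuffleFn a b w = shuffleFn b a w
  | [], a, b => by simp [shuffleFn_nil']; ring
  | i :: w, a, b => by
      rw [shuffleFn_cons', shuffleFn_cons', shuffleFn_comm w (lshift i a) b,
        shuffleFn_comm w a (lshift i b)]; ring

lemma lshift_shuffleFn (i : Fin 2) (a b : Series) :
    lshift i (shuffleFn a b) =
      (shuffleFn (lshift i a) b + shuffleFn a (lshift i b) : Series) :=
  funext fun u => shuffleFn_cons' a b i u

lemma shuffleFn_assoc : ∀ (w : Word) (a b c : Series),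
    shuffleFn (shuffleFn a b) c w = shuffleFn a (shuffleFn b c) w
  | [], a, b, c => by simp [shuffleFn_nil']; ring
  | i :: w, a, b, c => by
      rw [shuffleFn_cons', shuffleFn_cons', lshift_shuffleFn, lshift_shuffleFn,
        shuffleFn_add_left, shuffleFn_add_right,
        shuffleFn_assoc w (lshift i a) b c, shuffleFn_assoc w a (lshift i b) c,
        shuffleFn_assoc w a b (lshift i c)]
      ring

lemma shuffleFn_left_comm (v : Word) (x y z : Series) :
    shuffleFn x (shuffleFn y z) v = shuffleFn y (shuffleFn x z) v := by
  rw [← shuffleFn_assoc, ← shuffleFn_assoc,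
    shuffleFn_congr v (shuffleFn x y) (shuffleFn y x) z z
      (fun u _ => shuffleFn_comm u x y) (fun _ _ => rfl)]

lemma shuffleFn_sum_right {α : Type*} : ∀ (w : Word) (a : Series) (s : Finset α)
    (g : α → ℝ) (h : α → Series),
    shuffleFn a (fun u => ∑ x ∈ s, g x * h x u) w = ∑ x ∈ s, g x * shuffleFn a (h x) w
  | [], a, s, g, h => by
      simp [shuffleFn_nil', Finset.mul_sum]
      exact Finset.sum_congr rfl fun x _ => by ring
  | i :: w, a, s, g, h => by
      rw [shuffleFn_cons']
      have h1 : lshift i (fun u => ∑ x ∈ s, g x * h x u)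
          = fun u => ∑ x ∈ s, g x * (lshift i (h x)) u := rfl
      rw [h1, shuffleFn_sum_right w (lshift i a) s g h,
        shuffleFn_sum_right w a s g (fun x => lshift i (h x)), ← Finset.sum_add_distrib]
      exact Finset.sum_congr rfl fun x _ => by rw [shuffleFn_cons']; ring

lemma fin2 (i : Fin 2) : i = 0 ∨ i = 1 := by fin_cases i <;> simp

lemma mem_wordsLen {η : Word} {n : ℕ} : η ∈ wordsLen n ↔ η.length = n := by
  constructor
  · rintro h
    simp only [wordsLen, Finset.mem_image] at h
    obtain ⟨f, -, rfl⟩ := h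
    simp
  · rintro rfl
    simp only [wordsLen, Finset.mem_image]
    exact ⟨η.get, Finset.mem_univ _, List.ofFn_get η⟩

def Sfin (n : ℕ) : Finset Word := (Finset.range (n + 1)).biUnion wordsLen

lemma mem_Sfin {η : Word} {n : ℕ} : η ∈ Sfin n ↔ η.length ≤ n := by
  simp [Sfin, mem_wordsLen, Nat.lt_succ_iff]

lemma shuffleFn_vanish (w : Word) (a b : Series)
    (hb : ∀ u : Word, u.length ≤ w.length → b u = 0) : shuffleFn a b w = 0 := by
  rw [shuffleFn_congr w a a b 0 (fun _ _ => rfl) hb, shuffleFn_zero_right]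

lemma phi_vanish : ∀ (ξ : Word) (d e : Series) (w : Word),
    w.length < ξ.length → phi d ξ e w = 0
  | [], d, e, w, h => absurd h (by simp)
  | k :: ξ, d, e, w, h => by
    have hw : w.length ≤ ξ.length := Nat.lt_succ_iff.mp (by simpa using h)
    rcases fin2 k with rfl | rfl
    · show phiLetter d 0 (phi d ξ e) w = 0
      simp only [phiLetter, if_pos rfl]
      match w, hw with
      | [], _ => rfl
      | j :: v, hw =>
        show (if j = 0 then phi d ξ e v else 0) = 0
        have : phi d ξ e v = 0 := phi_vanish ξ d e v (by simpa using hw)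
        simp [this]
    · show phiLetter d 1 (phi d ξ e) w = 0
      simp only [phiLetter, if_neg (by decide : (1 : Fin 2) ≠ 0)]
      match w, hw with
      | [], _ => show (0:ℝ) + 0 = 0; simp
      | j :: v, hw =>
        have hv : v.length < ξ.length := by simpa using hw
        show (if j = 1 then phi d ξ e v else 0) +
          (if j = 0 then sh d (phi d ξ e) v else 0) = 0
        have h1 : phi d ξ e v = 0 := phi_vanish ξ d e v hv
        have h2 : sh d (phi d ξ e) v = 0 :=
          shuffleFn_vanish v d _ (fun u hu => phi_vanish ξ d e u (lt_of_le_of_lt hu hv))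
        simp [h1, h2]

lemma mcomp_eq_sum (c d : Series) {n : ℕ} (w : Word) (hw : w.length ≤ n) :
    mcomp c d w = ∑ η ∈ Sfin n, c η * phi d η one w := by
  refine tsum_eq_sum fun η hη => ?_
  have : n < η.length := by by_contra h; exact hη (mem_Sfin.mpr (not_lt.mp h))
  rw [phi_vanish η d one w (lt_of_le_of_lt hw this), mul_zero]

lemma mcomp_nil (c d : Series) : mcomp c d [] = c [] := by
  have h0 : Sfin 0 = {([] : Word)} := by
    ext η; simp [mem_Sfin, List.length_eq_zero_iff]
  rw [mcomp_eq_sum c d [] (le_refl 0), h0, Finset.sum_singleton]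
  show c [] * one [] = c []
  simp [one, ind, phi]

lemma mcomp_cons (c d : Series) (i : Fin 2) (v : Word) :
    mcomp c d (i :: v) =
      (∑ ν ∈ Sfin v.length, c (0 :: ν) * phiLetter d 0 (phi d ν one) (i :: v))
      + ∑ ν ∈ Sfin v.length, c (1 :: ν) * phiLetter d 1 (phi d ν one) (i :: v) := by
  classical
  set n := v.length with hn
  set T : Finset Word :=
    insert [] ((Sfin n).image (List.cons 0) ∪ (Sfin n).image (List.cons 1)) with hT
  have hsum : mcomp c d (i :: v) = ∑ η ∈ T, c η * phi d η one (i :: v) := by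
    refine tsum_eq_sum fun η hη => ?_
    match η with
    | [] => exact absurd (Finset.mem_insert_self _ _) hη
    | j :: ν =>
      by_cases hl : ν.length ≤ n
      · exfalso
        apply hη
        apply Finset.mem_insert_of_mem
        rcases fin2 j with rfl | rfl
        · exact Finset.mem_union_left _ (Finset.mem_image.mpr ⟨ν, mem_Sfin.mpr hl, rfl⟩)
        · exact Finset.mem_union_right _ (Finset.mem_image.mpr ⟨ν, mem_Sfin.mpr hl, rfl⟩)
      · have : (i :: v).length < (j :: ν).length := by
          simp only [List.length_cons]; omega
        rw [phi_vanish _ d one _ this, mul_zero]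
  have hnil : ([] : Word) ∉ (Sfin n).image (List.cons 0) ∪ (Sfin n).image (List.cons 1) := by
    simp
  have hdisj : Disjoint ((Sfin n).image (List.cons 0)) ((Sfin n).image (List.cons 1)) := by
    rw [Finset.disjoint_left]
    rintro x hx0 hx1
    obtain ⟨ν, -, rfl⟩ := Finset.mem_image.mp hx0
    obtain ⟨ν', -, h⟩ := Finset.mem_image.mp hx1
    exact absurd (List.head_eq_of_cons_eq h) (by decide)
  have hinj0 : Set.InjOn (List.cons (0 : Fin 2)) (Sfin n) := fun a _ b _ h => by
    simpa using h
  have hinj1 : Set.InjOn (List.cons (1 : Fin 2)) (Sfin n) := fun a _ b _ h => by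
    simpa using h
  rw [hsum, hT, Finset.sum_insert hnil, Finset.sum_union hdisj,
    Finset.sum_image hinj0, Finset.sum_image hinj1]
  have hone : c [] * phi d [] one (i :: v) = 0 := by
    show c [] * one (i :: v) = 0
    simp [one, ind]
  rw [hone, zero_add]
  rfl

lemma lconcat_cons (k : Fin 2) (e : Series) (j : Fin 2) (v : Word) :
    lconcat k e (j :: v) = if j = k then e v else 0 := rfl

lemma mcomp_cons_one (c d : Series) (v : Word) :
    mcomp c d (1 :: v) = mcomp (lshift 1 c) d v := by
  rw [mcomp_cons, mcomp_eq_sum (lshift 1 c) d v le_rfl]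
  have h0 : ∀ ν : Word, phiLetter d 0 (phi d ν one) (1 :: v) = 0 := fun ν => by
    simp [phiLetter, lconcat_cons]
  have h1 : ∀ ν : Word, phiLetter d 1 (phi d ν one) (1 :: v) = phi d ν one v := fun ν => by
    simp [phiLetter, lconcat_cons, (by decide : (1:Fin 2) ≠ 0)]
  simp only [h0, h1, mul_zero, Finset.sum_const_zero, zero_add]
  rfl

lemma mcomp_cons_zero (c d : Series) (v : Word) :
    mcomp c d (0 :: v) =
      mcomp (lshift 0 c) d v + shuffleFn d (mcomp (lshift 1 c) d) v := by
  rw [mcomp_cons]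
  have h0 : ∀ ν : Word, phiLetter d 0 (phi d ν one) (0 :: v) = phi d ν one v := fun ν => by
    simp [phiLetter, lconcat_cons]
  have h1 : ∀ ν : Word, phiLetter d 1 (phi d ν one) (0 :: v)
      = shuffleFn d (phi d ν one) v := fun ν => by
    simp [phiLetter, lconcat_cons, (by decide : (1:Fin 2) ≠ 0), sh]
  simp only [h0, h1]
  congr 1
  · rw [mcomp_eq_sum (lshift 0 c) d v le_rfl]; rfl
  · rw [← shuffleFn_sum_right v d (Sfin v.length) (fun ν => c (1 :: ν)) (fun ν => phi d ν one)]
    exact shuffleFn_congr v d d _ _ (fun _ _ => rfl)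
      (fun u hu => (mcomp_eq_sum (lshift 1 c) d u hu).symm)

lemma mcomp_zero_left_aux (d : Series) : ∀ (n : ℕ) (w : Word), w.length ≤ n →
    mcomp (0 : Series) d w = 0 := by
  intro n
  induction n with
  | zero =>
      intro w hw
      obtain rfl : w = [] := List.length_eq_zero_iff.mp (Nat.le_zero.mp hw)
      rw [mcomp_nil]; rfl
  | succ n IH =>
      intro w hw
      match w, hw with
      | [], _ => rw [mcomp_nil]; rfl
      | i :: v, hw =>
        have hv : v.length ≤ n := by simpa using hw
        rcases fin2 i with rfl | rfl
        · rw [mcomp_cons_zero, lshift_zero, lshift_zero, IH v hv]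
          have h2 : shuffleFn d (mcomp 0 d) v = 0 := by
            rw [shuffleFn_congr v d d (mcomp 0 d) 0 (fun _ _ => rfl)
              (fun u hu => IH u (le_trans hu hv)), shuffleFn_zero_right]
          rw [h2, add_zero]
        · rw [mcomp_cons_one, lshift_zero, IH v hv]

lemma mcomp_zero_right_aux : ∀ (n : ℕ) (w : Word), w.length ≤ n → ∀ c : Series,
    mcomp c 0 w = c w := by
  intro n
  induction n with
  | zero =>
      intro w hw c
      obtain rfl : w = [] := List.length_eq_zero_iff.mp (Nat.le_zero.mp hw)
      exact mcomp_nil c 0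
  | succ n IH =>
      intro w hw c
      match w, hw with
      | [], _ => exact mcomp_nil c 0
      | i :: v, hw =>
        have hv : v.length ≤ n := by simpa using hw
        rcases fin2 i with rfl | rfl
        · rw [mcomp_cons_zero, IH v hv, shuffleFn_zero_left, add_zero]; rfl
        · rw [mcomp_cons_one, IH v hv]; rfl

lemma mcomp_add_aux (d : Series) : ∀ (n : ℕ) (w : Word), w.length ≤ n → ∀ a b : Series,
    mcomp (a + b) d w = mcomp a d w + mcomp b d w := by
  intro n
  induction n with
  | zero =>
      intro w hw a b
      obtain rfl : w = [] := List.length_eq_zero_iff.mp (Nat.le_zero.mp hw)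
      rw [mcomp_nil, mcomp_nil, mcomp_nil]; rfl
  | succ n IH =>
      intro w hw a b
      match w, hw with
      | [], _ => rw [mcomp_nil, mcomp_nil, mcomp_nil]; rfl
      | i :: v, hw =>
        have hv : v.length ≤ n := by simpa using hw
        rcases fin2 i with rfl | rfl
        · rw [mcomp_cons_zero, mcomp_cons_zero, mcomp_cons_zero, lshift_add, lshift_add,
            IH v hv]
          have hsh : shuffleFn d (mcomp (lshift 1 a + lshift 1 b) d) v
              = shuffleFn d (mcomp (lshift 1 a) d + mcomp (lshift 1 b) d) v :=
            shuffleFn_congr v d d _ _ (fun _ _ => rfl)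
              (fun u hu => IH u (le_trans hu hv) _ _)
          rw [hsh, shuffleFn_add_right]
          ring
        · rw [mcomp_cons_one, mcomp_cons_one, mcomp_cons_one, lshift_add, IH v hv]

lemma mcomp_add (a b d : Series) (w : Word) :
    mcomp (a + b) d w = mcomp a d w + mcomp b d w :=
  mcomp_add_aux d w.length w le_rfl a b

lemma mcomp_sh (e : Series) : ∀ (n : ℕ) (w : Word), w.length ≤ n → ∀ d F : Series,
    mcomp (shuffleFn d F) e w = shuffleFn (mcomp d e) (mcomp F e) w := by
  intro n
  induction n with
  | zero =>
      intro w hw d F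
      obtain rfl : w = [] := List.length_eq_zero_iff.mp (Nat.le_zero.mp hw)
      rw [mcomp_nil, shuffleFn_nil', shuffleFn_nil', mcomp_nil, mcomp_nil]
  | succ n IH =>
      intro w hw d F
      match w, hw with
      | [], _ => rw [mcomp_nil, shuffleFn_nil', shuffleFn_nil', mcomp_nil, mcomp_nil]
      | i :: v, hw =>
        have hv : v.length ≤ n := by simpa using hw
        have hD1 : lshift 1 (mcomp d e) = mcomp (lshift 1 d) e :=
          funext fun u => mcomp_cons_one d e u
        have hF1 : lshift 1 (mcomp F e) = mcomp (lshift 1 F) e :=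
          funext fun u => mcomp_cons_one F e u
        rcases fin2 i with rfl | rfl
        · -- i = 0
          rw [mcomp_cons_zero, lshift_shuffleFn, lshift_shuffleFn, mcomp_add,
            IH v hv (lshift 0 d) F, IH v hv d (lshift 0 F)]
          have hterm2 : shuffleFn e (mcomp (shuffleFn (lshift 1 d) F
                + shuffleFn d (lshift 1 F)) e) v
              = shuffleFn e (shuffleFn (mcomp (lshift 1 d) e) (mcomp F e)
                + shuffleFn (mcomp d e) (mcomp (lshift 1 F) e)) v :=
            shuffleFn_congr v e e _ _ (fun _ _ => rfl) (fun u hu => by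
              rw [mcomp_add, IH u (le_trans hu hv) (lshift 1 d) F,
                IH u (le_trans hu hv) d (lshift 1 F)]
              rfl)
          rw [hterm2, shuffleFn_add_right]
          have hD0 : lshift 0 (mcomp d e)
              = (mcomp (lshift 0 d) e + shuffleFn e (mcomp (lshift 1 d) e) : Series) :=
            funext fun u => mcomp_cons_zero d e u
          have hF0 : lshift 0 (mcomp F e)
              = (mcomp (lshift 0 F) e + shuffleFn e (mcomp (lshift 1 F) e) : Series) :=
            funext fun u => mcomp_cons_zero F e u
          rw [shuffleFn_cons', hD0, hF0, shuffleFn_add_left, shuffleFn_add_right,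
            shuffleFn_assoc v e (mcomp (lshift 1 d) e) (mcomp F e),
            shuffleFn_left_comm v (mcomp d e) e (mcomp (lshift 1 F) e)]
          ring
        · -- i = 1
          rw [mcomp_cons_one, lshift_shuffleFn, mcomp_add,
            IH v hv (lshift 1 d) F, IH v hv d (lshift 1 F),
            shuffleFn_cons', hD1, hF1]

lemma mcomp_mcomp (d e : Series) : ∀ (n : ℕ) (w : Word), w.length ≤ n → ∀ c : Series,
    mcomp (mcomp c d) e w = mcomp c (e + mcomp d e) w := by
  intro n
  induction n with
  | zero =>
      intro w hw c
      obtain rfl : w = [] := List.length_eq_zero_iff.mp (Nat.le_zero.mp hw)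
      rw [mcomp_nil, mcomp_nil, mcomp_nil]
  | succ n IH =>
      intro w hw c
      match w, hw with
      | [], _ => rw [mcomp_nil, mcomp_nil, mcomp_nil]
      | i :: v, hw =>
        have hv : v.length ≤ n := by simpa using hw
        have h1 : lshift 1 (mcomp c d) = mcomp (lshift 1 c) d :=
          funext fun u => mcomp_cons_one c d u
        rcases fin2 i with rfl | rfl
        · -- i = 0
          have h0 : lshift 0 (mcomp c d)
              = (mcomp (lshift 0 c) d + shuffleFn d (mcomp (lshift 1 c) d) : Series) :=
            funext fun u => mcomp_cons_zero c d u
          rw [mcomp_cons_zero, h0, h1, mcomp_add, IH v hv (lshift 0 c),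
            mcomp_sh e v.length v le_rfl d (mcomp (lshift 1 c) d)]
          have hMF : shuffleFn (mcomp d e) (mcomp (mcomp (lshift 1 c) d) e) v
              = shuffleFn (mcomp d e) (mcomp (lshift 1 c) (e + mcomp d e)) v :=
            shuffleFn_congr v _ _ _ _ (fun _ _ => rfl)
              (fun u hu => IH u (le_trans hu hv) (lshift 1 c))
          have hsh2 : shuffleFn e (mcomp (mcomp (lshift 1 c) d) e) v
              = shuffleFn e (mcomp (lshift 1 c) (e + mcomp d e)) v :=
            shuffleFn_congr v _ _ _ _ (fun _ _ => rfl)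
              (fun u hu => IH u (le_trans hu hv) (lshift 1 c))
          rw [hMF, hsh2, mcomp_cons_zero c (e + mcomp d e) v, shuffleFn_add_left]
          ring
        · -- i = 1
          rw [mcomp_cons_one, h1, IH v hv (lshift 1 c),
            mcomp_cons_one c (e + mcomp d e) v]

lemma mcomp_dep : ∀ (n : ℕ) (w : Word), w.length ≤ n → ∀ (a d d' : Series),
    (∀ u : Word, u.length < w.length → d u = d' u) → mcomp a d w = mcomp a d' w := by
  intro n
  induction n with
  | zero =>
      intro w hw a d d' h
      obtain rfl : w = [] := List.length_eq_zero_iff.mp (Nat.le_zero.mp hw)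
      rw [mcomp_nil, mcomp_nil]
  | succ n IH =>
      intro w hw a d d' h
      match w, hw with
      | [], _ => rw [mcomp_nil, mcomp_nil]
      | i :: v, hw =>
        have hv : v.length ≤ n := by simpa using hw
        have hvlt : ∀ u : Word, u.length ≤ v.length → u.length < (i :: v).length :=
          fun u hu => by simp only [List.length_cons]; omega
        rcases fin2 i with rfl | rfl
        · rw [mcomp_cons_zero, mcomp_cons_zero,
            IH v hv (lshift 0 a) d d' (fun u hu => h u (hvlt u (le_of_lt hu)))]
          congr 1
          refine shuffleFn_congr v d d' _ _ (fun u hu => h u (hvlt u hu)) (fun u hu => ?_)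
          exact IH u (le_trans hu hv) (lshift 1 a) d d'
            (fun u' hu' => h u' (hvlt u' (le_trans (le_of_lt hu') hu)))
        · rw [mcomp_cons_one, mcomp_cons_one,
            IH v hv (lshift 1 a) d d' (fun u hu => h u (hvlt u (le_of_lt hu)))]

/-- Truncated approximations to the feedback inverse. -/
def tInv (c : Series) : ℕ → Series
  | 0 => 0
  | n + 1 => fun w => if w.length ≤ n then -(mcomp c (tInv c n) w) else 0

lemma tInv_coh (c : Series) : ∀ (n : ℕ) (w : Word), w.length < n →
    tInv c (n + 1) w = tInv c n w := by
  intro n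
  induction n with
  | zero => intro w hw; exact absurd hw (by omega)
  | succ k IH =>
      intro w hw
      have hw' : w.length ≤ k := Nat.lt_succ_iff.mp hw
      show (if w.length ≤ k + 1 then -(mcomp c (tInv c (k + 1)) w) else 0)
          = (if w.length ≤ k then -(mcomp c (tInv c k) w) else 0)
      rw [if_pos (le_trans hw' (Nat.le_succ k)), if_pos hw']
      have : mcomp c (tInv c (k + 1)) w = mcomp c (tInv c k) w :=
        mcomp_dep w.length w le_rfl c _ _
          (fun u hu => IH u (lt_of_lt_of_le hu hw'))
      rw [this]

lemma tInv_stable (c : Series) : ∀ (m n : ℕ), n ≤ m → ∀ w : Word, w.length < n →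
    tInv c m w = tInv c n w := by
  intro m
  induction m with
  | zero =>
      intro n hn w hw
      obtain rfl : n = 0 := Nat.le_zero.mp hn
      exact absurd hw (by omega)
  | succ k IH =>
      intro n hn w hw
      rcases Nat.lt_succ_iff_lt_or_eq.mp (Nat.lt_succ_of_le hn) with h | rfl
      · have hnk : n ≤ k := Nat.lt_succ_iff.mp h
        rw [tInv_coh c k w (lt_of_lt_of_le hw hnk), IH n hnk w hw]
      · rfl

/-- The feedback inverse series. -/
def invS (c : Series) : Series := fun w => tInv c (w.length + 1) w

lemma invS_eq (c : Series) (n : ℕ) (u : Word) (hu : u.length < n) :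
    invS c u = tInv c n u := by
  rcases le_or_gt n (u.length + 1) with h | h
  · exact tInv_stable c (u.length + 1) n h u hu
  · exact (tInv_stable c n (u.length + 1) (le_of_lt h) u (Nat.lt_succ_self _)).symm

lemma gop_inv (c : Series) : gop c (invS c) = 0 := by
  funext w
  show invS c w + mcomp c (invS c) w = 0
  have h1 : invS c w = -(mcomp c (tInv c w.length) w) := by
    show (if w.length ≤ w.length then -(mcomp c (tInv c w.length) w) else 0) = _
    rw [if_pos le_rfl]
  have h2 : mcomp c (invS c) w = mcomp c (tInv c w.length) w :=
    mcomp_dep w.length w le_rfl c _ _ (fun u hu => invS_eq c w.length u hu)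
  rw [h1, h2]
  ring

end Paper

open Paper in
/-- The set `ℝ⟨⟨X_δ⟩⟩ = {δ + c : c ∈ ℝ⟨⟨X⟩⟩}` with the composition
product `c_δ ∘ d_δ := δ + d + c ∘̃ d` is a group with unit `δ`: the product is associative,
`δ + 0` is a two-sided identity, and every `c_δ` has a two-sided inverse `δ + c^{∘-1}`.
(Here elements `δ + c` are identified with their series parts `c`, so the group operation
becomes `gop c d = d + c ∘̃ d` and the unit is `0`.) -/
theorem feedback_group :
    (∀ c d e : Series, gop (gop c d) e = gop c (gop d e)) ∧
    (∀ c : Series, gop c 0 = c ∧ gop 0 c = c) ∧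
    (∀ c : Series, ∃ ci : Series, gop c ci = 0 ∧ gop ci c = 0) := by
  have idr : ∀ c : Series, gop c 0 = c := fun c => funext fun w => by
    simp only [gop, Pi.add_apply, Pi.zero_apply]
    rw [mcomp_zero_right_aux w.length w le_rfl c, zero_add]
  have idl : ∀ c : Series, gop 0 c = c := fun c => funext fun w => by
    simp only [gop, Pi.add_apply]
    rw [mcomp_zero_left_aux c w.length w le_rfl, add_zero]
  have assoc : ∀ c d e : Series, gop (gop c d) e = gop c (gop d e) := by
    intro c d e
    funext w
    simp only [gop, Pi.add_apply]
    rw [mcomp_add, mcomp_mcomp d e w.length w le_rfl c]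
    ring
  refine ⟨assoc, fun c => ⟨idr c, idl c⟩, fun c => ⟨invS c, gop_inv c, ?_⟩⟩
  calc gop (invS c) c
      = gop (gop (invS c) c) 0 := (idr _).symm
    _ = gop (gop (invS c) c) (gop (invS c) (invS (invS c))) := by rw [gop_inv (invS c)]
    _ = gop (invS c) (gop c (gop (invS c) (invS (invS c)))) := assoc _ _ _
    _ = gop (invS c) (gop (gop c (invS c)) (invS (invS c))) := by
        rw [assoc c (invS c) (invS (invS c))]
    _ = gop (invS c) (gop 0 (invS (invS c))) := by rw [gop_inv c]
    _ = gop (invS c) (invS (invS c)) := by rw [idl]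
    _ = 0 := gop_inv (invS c)
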